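/- Every finite nilpotent group G of nilpotency class at most 2 has an abelian section of size at least |G|^(1/2), i.e., there exist subgroups B ⊴ A ≤ G with A/B abelian and |A/B|² ≥ |G|. -/

import Mathlib

/-!
Let `Z` be the center of `G`. Since `G' ≤ Z`, both `Z` (as `Z / 1`) and `G / Z` are abelian
sections of `G`, and `|G| = |Z| · |G : Z|`, so the larger of the two has square at least `|G|`.
-/

theorem Nat.le_max_sq_of_eq_mul {n a b : ℕ} (h : n = a * b) : n ≤ max a b ^ 2 :=
  h ▸ sq (max a b) ▸ Nat.mul_le_mul (le_max_left a b) (le_max_right a b)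

namespace Subgroup

variable {G : Type*} [Group G]

theorem commutator_le_subgroupOf {N : Subgroup G} (hN : _root_.commutator G ≤ N)
    (A : Subgroup G) : _root_.commutator A ≤ N.subgroupOf A := by
  rw [subgroupOf, ← map_le_iff_le_comap, _root_.commutator, map_commutator,
    ← MonoidHom.range_eq_map, range_subtype]
  exact (commutator_mono le_top le_top).trans hN

end Subgroup

theorem class_two_exists_abelian_section_sq_general {G : Type*} [Group G]
    (hG : commutator G ≤ Subgroup.center G) :
    ∃ (A : Subgroup G) (B : Subgroup A), B.Normal ∧ commutator ↥A ≤ B ∧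
      Nat.card G ≤ (Nat.card (↥A ⧸ B)) ^ 2 := by
  set Z := Subgroup.center G
  have hcard : Nat.card G = Z.index * Nat.card Z := by
    rw [mul_comm, Z.card_mul_index]
  rcases le_total (Nat.card Z) Z.index with hZ | hZ
  · refine ⟨⊤, Z.subgroupOf ⊤, inferInstance, Subgroup.commutator_le_subgroupOf hG ⊤, ?_⟩
    rw [← Subgroup.index, ← Subgroup.relIndex, Subgroup.relIndex_top_right, ← max_eq_left hZ]
    exact Nat.le_max_sq_of_eq_mul hcard
  · refine ⟨Z, ⊥, inferInstance, (commutator_eq_bot Z).le, ?_⟩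
    rw [← Subgroup.index, Subgroup.index_bot, ← max_eq_right hZ]
    exact Nat.le_max_sq_of_eq_mul hcard

/-- Every finite nilpotent group `G` of class at most 2 (i.e. with derived subgroup
contained in the center) has an abelian section `A/B` with `|A/B|² ≥ |G|`. -/
theorem class_two_exists_abelian_section_sq {G : Type*} [Group G] [Fintype G]
    (hG : commutator G ≤ Subgroup.center G) :
    ∃ (A : Subgroup G) (B : Subgroup A), B.Normal ∧ commutator ↥A ≤ B ∧
      Nat.card G ≤ (Nat.card (↥A ⧸ B)) ^ 2 :=
  class_two_exists_abelian_section_sq_general hG
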